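/- Let z ∈ L²(Ω;E₁) and w ∈ L²(Ω;E₂) for separable Hilbert spaces E₁, E₂. Then there exists U ∈ B(E₁,E₂) with ‖U‖ ≤ 1 and U = P_{cl ran C_w^{1/2}} U P_{cl ran C_z^{1/2}} such that C_{zw}* = C_{wz} has the representation C_{wz} = C_w^{1/2} U C_z^{1/2}. -/

import Mathlib

open scoped InnerProductSpace RealInnerProductSpace
open MeasureTheory ContinuousLinearMap
noncomputable section

/-- Orthogonal projection onto the closure of the range of a bounded operator. -/
noncomputable def projClosureRan {E F : Type*}
    [NormedAddCommGroup E] [InnerProductSpace ℝ E] [CompleteSpace E]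
    [NormedAddCommGroup F] [InnerProductSpace ℝ F] [CompleteSpace F]
    (C : E →L[ℝ] F) : F →L[ℝ] F :=
  letI : CompleteSpace ((LinearMap.range (C : E →ₗ[ℝ] F)).topologicalClosure) :=
    (Submodule.isClosed_topologicalClosure _).completeSpace_coe
  ((LinearMap.range (C : E →ₗ[ℝ] F)).topologicalClosure).subtypeL ∘L
    Submodule.orthogonalProjectionOnto ((LinearMap.range (C : E →ₗ[ℝ] F)).topologicalClosure)

section ProjClosureRan

variable {E F : Type*}
    [NormedAddCommGroup E] [InnerProductSpace ℝ E] [CompleteSpace E]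
    [NormedAddCommGroup F] [InnerProductSpace ℝ F] [CompleteSpace F]
    (C : E →L[ℝ] F)

lemma projClosureRan_isSelfAdjoint : IsSelfAdjoint (projClosureRan C) := by
  letI : CompleteSpace ((LinearMap.range (C : E →ₗ[ℝ] F)).topologicalClosure) :=
    (Submodule.isClosed_topologicalClosure _).completeSpace_coe
  exact isSelfAdjoint_starProjection _

lemma projClosureRan_mem (y : F) :
    projClosureRan C y ∈ (LinearMap.range (C : E →ₗ[ℝ] F)).topologicalClosure := by
  letI : CompleteSpace ((LinearMap.range (C : E →ₗ[ℝ] F)).topologicalClosure) :=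
    (Submodule.isClosed_topologicalClosure _).completeSpace_coe
  exact (Submodule.orthogonalProjectionOnto ((LinearMap.range (C : E →ₗ[ℝ] F)).topologicalClosure) y).2

lemma projClosureRan_eq_self {y : F} (hy : y ∈ (LinearMap.range (C : E →ₗ[ℝ] F)).topologicalClosure) :
    projClosureRan C y = y := by
  letI : CompleteSpace ((LinearMap.range (C : E →ₗ[ℝ] F)).topologicalClosure) :=
    (Submodule.isClosed_topologicalClosure _).completeSpace_coe
  exact Submodule.starProjection_eq_self_iff.mpr hy

lemma norm_projClosureRan_le (y : F) : ‖projClosureRan C y‖ ≤ ‖y‖ := by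
  letI : CompleteSpace ((LinearMap.range (C : E →ₗ[ℝ] F)).topologicalClosure) :=
    (Submodule.isClosed_topologicalClosure _).completeSpace_coe
  calc ‖projClosureRan C y‖
      = ‖(Submodule.orthogonalProjectionOnto ((LinearMap.range (C : E →ₗ[ℝ] F)).topologicalClosure) y : F)‖ := rfl
    _ ≤ ‖y‖ := by
        have := Submodule.orthogonalProjectionOnto_norm_le (K := (LinearMap.range (C : E →ₗ[ℝ] F)).topologicalClosure)
        calc ‖(Submodule.orthogonalProjectionOnto ((LinearMap.range (C : E →ₗ[ℝ] F)).topologicalClosure) y : F)‖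
            = ‖Submodule.orthogonalProjectionOnto ((LinearMap.range (C : E →ₗ[ℝ] F)).topologicalClosure) y‖ := rfl
          _ ≤ ‖(Submodule.orthogonalProjectionOnto ((LinearMap.range (C : E →ₗ[ℝ] F)).topologicalClosure) :
                F →L[ℝ] _)‖ * ‖y‖ := le_opNorm _ _
          _ ≤ 1 * ‖y‖ := by
              apply mul_le_mul_of_nonneg_right this (norm_nonneg _)
          _ = ‖y‖ := one_mul _

end ProjClosureRan

/-- Douglas' factorization lemma: if `‖A x‖ ≤ M * ‖B x‖` for all `x`, then `A = C ∘ B` for a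
bounded operator `C` of norm at most `M`, supported on the closure of the range of `B` and
with range inside the closure of the range of `A`. -/
theorem douglas {E F G : Type*}
    [NormedAddCommGroup E] [InnerProductSpace ℝ E] [CompleteSpace E]
    [NormedAddCommGroup F] [InnerProductSpace ℝ F] [CompleteSpace F]
    [NormedAddCommGroup G] [InnerProductSpace ℝ G] [CompleteSpace G]
    (A : E →L[ℝ] F) (B : E →L[ℝ] G) (M : ℝ) (hM : 0 ≤ M)
    (h : ∀ x, ‖A x‖ ≤ M * ‖B x‖) :
    ∃ C : G →L[ℝ] F, ‖C‖ ≤ M ∧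
      (∀ y, C y ∈ (LinearMap.range (A : E →ₗ[ℝ] F)).topologicalClosure) ∧
      C ∘L projClosureRan B = C ∧ A = C ∘L B := by
  classical
  set S : Submodule ℝ G := LinearMap.range (B : E →ₗ[ℝ] G) with hS
  set H : Submodule ℝ G := S.topologicalClosure with hH
  letI : CompleteSpace H := (Submodule.isClosed_topologicalClosure _).completeSpace_coe
  have key : ∀ x x' : E, B x = B x' → A x = A x' := by
    intro x x' hxx
    have : ‖A x - A x'‖ ≤ M * ‖B x - B x'‖ := by
      simpa [map_sub] using h (x - x')
    rw [hxx, sub_self, norm_zero, mul_zero] at this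
    exact sub_eq_zero.mp (norm_le_zero_iff.mp this)
  have hpre : ∀ y : S, ∃ x : E, B x = (y : G) := fun y => y.2
  have hc : ∀ y : S, B ((hpre y).choose) = (y : G) := fun y => (hpre y).choose_spec
  let C₀lin : S →ₗ[ℝ] F :=
    { toFun := fun y => A ((hpre y).choose)
      map_add' := by
        intro y y'
        show A _ = A _ + A _
        rw [← map_add]
        apply key
        rw [hc, map_add, hc, hc]
        rfl
      map_smul' := by
        intro c y
        show A _ = c • A _
        rw [← A.map_smul]
        apply key
        rw [hc, B.map_smul, hc]
        rfl }
  have hC₀bound : ∀ y : S, ‖C₀lin y‖ ≤ M * ‖y‖ := by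
    intro y
    have := h ((hpre y).choose)
    rw [hc] at this
    exact this
  let C₀ : S →L[ℝ] F := C₀lin.mkContinuous M hC₀bound
  have hC₀apply : ∀ y : S, C₀ y = A ((hpre y).choose) := fun y => rfl
  -- the inclusion S → H
  let ιlin : S →ₗ[ℝ] H := Submodule.inclusion (Submodule.le_topologicalClosure S)
  have hι : ∀ y : S, ‖ιlin y‖ = ‖y‖ := fun y => rfl
  let ι : S →L[ℝ] H := ιlin.mkContinuous 1 (fun y => by rw [hι]; simp)
  have hιapply : ∀ y : S, (ι y : G) = (y : G) := fun y => rfl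
  have hιnorm : ∀ y : S, ‖y‖ ≤ ((1:NNReal) : ℝ) * ‖ι y‖ := fun y => by
    have : ‖ι y‖ = ‖y‖ := rfl
    rw [this]; simp
  have hdense : DenseRange ι := by
    intro x
    have hx : (x : G) ∈ closure (S : Set G) := x.2
    rw [Metric.mem_closure_iff] at hx
    rw [mem_closure_iff_nhds_basis Metric.nhds_basis_ball]
    intro ε hε
    obtain ⟨y, hyS, hy⟩ := hx ε hε
    refine ⟨ι ⟨y, hyS⟩, ⟨⟨y, hyS⟩, rfl⟩, ?_⟩
    rw [Metric.mem_ball]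
    have : dist (ι ⟨y, hyS⟩) x = dist y (x : G) := rfl
    rw [this, dist_comm]
    exact hy
  have hui : IsUniformInducing ι :=
    (ContinuousLinearMap.isUniformEmbedding_of_bound ι hιnorm).isUniformInducing
  let Cext : H →L[ℝ] F := C₀.extend ι
  have hCextnorm : ‖Cext‖ ≤ M := by
    have h1 : ‖C₀.extend ι‖
        ≤ (1:NNReal) * ‖C₀‖ :=
      ContinuousLinearMap.opNorm_extend_le (f := C₀) (e := ι) hdense hιnorm
    have h2 : ‖C₀‖ ≤ M := C₀lin.mkContinuous_norm_le hM hC₀bound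
    calc ‖Cext‖ ≤ (1:NNReal) * ‖C₀‖ := h1
      _ ≤ M := by simpa using h2
  have hCexteq : ∀ y : S, Cext (ι y) = C₀ y := fun y =>
    ContinuousLinearMap.extend_eq (f := C₀) (e := ι) hdense hui y
  -- the candidate operator
  let C : G →L[ℝ] F := Cext ∘L (Submodule.orthogonalProjectionOnto H)
  have hproj : ∀ (y : G) (hy : y ∈ H), (Submodule.orthogonalProjectionOnto H y : H) = ⟨y, hy⟩ := by
    intro y hy
    ext
    exact Submodule.starProjection_eq_self_iff.mpr hy
  have hCB : ∀ x : E, C (B x) = A x := by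
    intro x
    have hmem : B x ∈ S := ⟨x, rfl⟩
    have hmemH : B x ∈ H := Submodule.le_topologicalClosure S hmem
    have h1 : (Submodule.orthogonalProjectionOnto H (B x) : H) = ι ⟨B x, hmem⟩ := by
      rw [hproj (B x) hmemH]; rfl
    show Cext (Submodule.orthogonalProjectionOnto H (B x)) = A x
    rw [h1, hCexteq]
    rw [hC₀apply]
    apply key
    rw [hc]
  refine ⟨C, ?_, ?_, ?_, ?_⟩
  · calc ‖C‖ ≤ ‖Cext‖ * ‖(Submodule.orthogonalProjectionOnto H : G →L[ℝ] H)‖ :=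
        ContinuousLinearMap.opNorm_comp_le _ _
      _ ≤ ‖Cext‖ := mul_le_of_le_one_right (ContinuousLinearMap.opNorm_nonneg _)
          (Submodule.orthogonalProjectionOnto_norm_le (K := H))
      _ ≤ M := hCextnorm
  · -- range condition
    have hran : ∀ hx : H, Cext hx ∈ (LinearMap.range (A : E →ₗ[ℝ] F)).topologicalClosure := by
      have hcl : IsClosed {hx : H | Cext hx ∈ (LinearMap.range (A : E →ₗ[ℝ] F)).topologicalClosure} := by
        have : IsClosed ((LinearMap.range (A : E →ₗ[ℝ] F)).topologicalClosure : Set F) :=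
          Submodule.isClosed_topologicalClosure _
        exact this.preimage Cext.continuous
      intro hx
      refine hdense.induction_on hx hcl ?_
      intro y
      rw [hCexteq, hC₀apply]
      exact Submodule.le_topologicalClosure _ ⟨_, rfl⟩
    intro y
    exact hran _
  · -- projection condition
    ext y
    show Cext (Submodule.orthogonalProjectionOnto H (H.subtypeL (Submodule.orthogonalProjectionOnto H y)))
        = Cext (Submodule.orthogonalProjectionOnto H y)
    congr 1
    exact Submodule.orthogonalProjectionOnto_mem_subspace_eq_self _
  · ext x
    exact (hCB x).symm

lemma norm_sq_integral {Ω E : Type*} [MeasurableSpace Ω] (P : Measure Ω)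
    [IsProbabilityMeasure P]
    [NormedAddCommGroup E] [InnerProductSpace ℝ E] [CompleteSpace E]
    (z : Ω → E)
    (Cz : E →L[ℝ] E) (hCz : ∀ e e' : E, ⟪Cz e, e'⟫ = ∫ ω, ⟪z ω, e'⟫ * ⟪e, z ω⟫ ∂P)
    (Rz : E →L[ℝ] E) (hRz : Rz.IsPositive) (hRz2 : Rz ∘L Rz = Cz) (e : E) :
    ‖Rz e‖ ^ 2 = ∫ ω, ⟪e, z ω⟫ * ⟪e, z ω⟫ ∂P := by
  have hsym := (ContinuousLinearMap.isSelfAdjoint_iff_isSymmetric.mp hRz.isSelfAdjoint)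
  have h1 : ‖Rz e‖ ^ 2 = ⟪Rz e, Rz e⟫ := (real_inner_self_eq_norm_sq _).symm
  have h2 : ⟪Rz e, Rz e⟫ = ⟪Cz e, e⟫ := by
    rw [← hRz2]
    calc ⟪Rz e, Rz e⟫ = ⟪e, Rz (Rz e)⟫ := hsym e (Rz e)
      _ = ⟪(Rz ∘L Rz) e, e⟫ := by rw [real_inner_comm]; rfl
  rw [h1, h2, hCz]
  congr 1
  funext ω
  rw [real_inner_comm (z ω) e]

lemma cs_bound {Ω E₁ E₂ : Type*} [MeasurableSpace Ω] (P : Measure Ω)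
    [IsProbabilityMeasure P]
    [NormedAddCommGroup E₁] [InnerProductSpace ℝ E₁] [CompleteSpace E₁]
    [NormedAddCommGroup E₂] [InnerProductSpace ℝ E₂] [CompleteSpace E₂]
    (z : Ω → E₁) (w : Ω → E₂) (hz : MemLp z 2 P) (hw : MemLp w 2 P)
    (Cz : E₁ →L[ℝ] E₁) (hCz : ∀ e e' : E₁, ⟪Cz e, e'⟫ = ∫ ω, ⟪z ω, e'⟫ * ⟪e, z ω⟫ ∂P)
    (Cw : E₂ →L[ℝ] E₂) (hCw : ∀ f f' : E₂, ⟪Cw f, f'⟫ = ∫ ω, ⟪w ω, f'⟫ * ⟪f, w ω⟫ ∂P)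
    (Cwz : E₁ →L[ℝ] E₂) (hCwz : ∀ (e : E₁) (f : E₂), ⟪Cwz e, f⟫ = ∫ ω, ⟪w ω, f⟫ * ⟪e, z ω⟫ ∂P)
    (Rz : E₁ →L[ℝ] E₁) (hRz : Rz.IsPositive) (hRz2 : Rz ∘L Rz = Cz)
    (Rw : E₂ →L[ℝ] E₂) (hRw : Rw.IsPositive) (hRw2 : Rw ∘L Rw = Cw)
    (e : E₁) (f : E₂) :
    |⟪Cwz e, f⟫| ≤ ‖Rz e‖ * ‖Rw f‖ := by
  have hgz : MemLp (fun ω => ⟪e, z ω⟫) 2 P := hz.const_inner e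
  have hgw : MemLp (fun ω => ⟪w ω, f⟫) 2 P := hw.inner_const f
  set fz : Lp ℝ 2 P := hgz.toLp _ with hfz
  set fw : Lp ℝ 2 P := hgw.toLp _ with hfw
  have hefz : fz =ᵐ[P] fun ω => ⟪e, z ω⟫ := hgz.coeFn_toLp
  have hefw : fw =ᵐ[P] fun ω => ⟪w ω, f⟫ := hgw.coeFn_toLp
  have hinner : ⟪fw, fz⟫_ℝ = ⟪Cwz e, f⟫ := by
    rw [MeasureTheory.L2.inner_def, hCwz]
    apply integral_congr_ae
    filter_upwards [hefz, hefw] with ω h1 h2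
    simp [RCLike.inner_apply, h1, h2, mul_comm]
  have hnz : ‖fz‖ = ‖Rz e‖ := by
    have h1 : ‖fz‖ ^ 2 = ⟪fz, fz⟫_ℝ := (real_inner_self_eq_norm_sq _).symm
    have h2 : ⟪fz, fz⟫_ℝ = ∫ ω, ⟪e, z ω⟫ * ⟪e, z ω⟫ ∂P := by
      rw [MeasureTheory.L2.inner_def]
      apply integral_congr_ae
      filter_upwards [hefz] with ω h1
      simp [RCLike.inner_apply, h1, pow_two]
    have h3 := norm_sq_integral P z Cz hCz Rz hRz hRz2 e
    have : ‖fz‖ ^ 2 = ‖Rz e‖ ^ 2 := by rw [h1, h2, ← h3]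
    have h4 := congrArg Real.sqrt this
    rwa [Real.sqrt_sq (norm_nonneg _), Real.sqrt_sq (norm_nonneg _)] at h4
  have hnw : ‖fw‖ = ‖Rw f‖ := by
    have h1 : ‖fw‖ ^ 2 = ⟪fw, fw⟫_ℝ := (real_inner_self_eq_norm_sq _).symm
    have h2 : ⟪fw, fw⟫_ℝ = ∫ ω, ⟪f, w ω⟫ * ⟪f, w ω⟫ ∂P := by
      rw [MeasureTheory.L2.inner_def]
      apply integral_congr_ae
      filter_upwards [hefw] with ω h1
      simp [RCLike.inner_apply, h1, real_inner_comm (w ω) f, pow_two]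
    have h3 := norm_sq_integral P w Cw hCw Rw hRw hRw2 f
    have : ‖fw‖ ^ 2 = ‖Rw f‖ ^ 2 := by rw [h1, h2, ← h3]
    have h4 := congrArg Real.sqrt this
    rwa [Real.sqrt_sq (norm_nonneg _), Real.sqrt_sq (norm_nonneg _)] at h4
  calc |⟪Cwz e, f⟫| = |⟪fw, fz⟫_ℝ| := by rw [hinner]
    _ ≤ ‖fw‖ * ‖fz‖ := abs_real_inner_le_norm _ _
    _ = ‖Rz e‖ * ‖Rw f‖ := by rw [hnz, hnw, mul_comm]

/-- Let z ∈ L²(Ω;E₁) and w ∈ L²(Ω;E₂).  Then there exists U ∈ B(E₁,E₂) with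
‖U‖ ≤ 1 and U = P_{cl ran C_w^{1/2}} U P_{cl ran C_z^{1/2}} such that the uncentered
cross-covariance C_{wz} has the representation C_{wz} = C_w^{1/2} U C_z^{1/2}.  Here Rz, Rw
are the positive self-adjoint square roots of the uncentered covariances C_z, C_w. -/
theorem stmt18 {Ω E₁ E₂ : Type*} [MeasurableSpace Ω] (P : Measure Ω)
    [IsProbabilityMeasure P]
    [NormedAddCommGroup E₁] [InnerProductSpace ℝ E₁] [CompleteSpace E₁]
    [NormedAddCommGroup E₂] [InnerProductSpace ℝ E₂] [CompleteSpace E₂]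
    (z : Ω → E₁) (w : Ω → E₂) (hz : MemLp z 2 P) (hw : MemLp w 2 P)
    (Cz : E₁ →L[ℝ] E₁) (hCz : ∀ e e' : E₁, ⟪Cz e, e'⟫ = ∫ ω, ⟪z ω, e'⟫ * ⟪e, z ω⟫ ∂P)
    (Cw : E₂ →L[ℝ] E₂) (hCw : ∀ f f' : E₂, ⟪Cw f, f'⟫ = ∫ ω, ⟪w ω, f'⟫ * ⟪f, w ω⟫ ∂P)
    (Cwz : E₁ →L[ℝ] E₂) (hCwz : ∀ (e : E₁) (f : E₂), ⟪Cwz e, f⟫ = ∫ ω, ⟪w ω, f⟫ * ⟪e, z ω⟫ ∂P)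
    (Rz : E₁ →L[ℝ] E₁) (hRz : Rz.IsPositive) (hRz2 : Rz ∘L Rz = Cz)
    (Rw : E₂ →L[ℝ] E₂) (hRw : Rw.IsPositive) (hRw2 : Rw ∘L Rw = Cw) :
    ∃ U : E₁ →L[ℝ] E₂, ‖U‖ ≤ 1 ∧
      projClosureRan Rw ∘L U ∘L projClosureRan Rz = U ∧
      Cwz = Rw ∘L U ∘L Rz := by
  classical
  have hcs : ∀ (e : E₁) (f : E₂), |⟪Cwz e, f⟫| ≤ ‖Rz e‖ * ‖Rw f‖ :=
    cs_bound P z w hz hw Cz hCz Cw hCw Cwz hCwz Rz hRz hRz2 Rw hRw hRw2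
  -- step 0: pointwise norm bound on Cwz
  have hCwznorm : ∀ e, ‖Cwz e‖ ≤ ‖Rw‖ * ‖Rz e‖ := by
    intro e
    rcases eq_or_lt_of_le (norm_nonneg (Cwz e)) with h0 | h0
    · rw [← h0]; positivity
    · have h1 : ‖Cwz e‖ * ‖Cwz e‖ ≤ (‖Rw‖ * ‖Rz e‖) * ‖Cwz e‖ := by
        calc ‖Cwz e‖ * ‖Cwz e‖ = ⟪Cwz e, Cwz e⟫ := (real_inner_self_eq_norm_mul_norm _).symm
          _ ≤ |⟪Cwz e, Cwz e⟫| := le_abs_self _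
          _ ≤ ‖Rz e‖ * ‖Rw (Cwz e)‖ := hcs e (Cwz e)
          _ ≤ ‖Rz e‖ * (‖Rw‖ * ‖Cwz e‖) :=
              mul_le_mul_of_nonneg_left (Rw.le_opNorm _) (norm_nonneg _)
          _ = (‖Rw‖ * ‖Rz e‖) * ‖Cwz e‖ := by ring
      exact le_of_mul_le_mul_right h1 h0
  -- first Douglas factorization : Cwz = D ∘L Rz
  obtain ⟨D, hDnorm, hDran, hDproj, hDfac⟩ :=
    douglas Cwz Rz ‖Rw‖ (norm_nonneg _) hCwznorm
  set Dadj : E₂ →L[ℝ] E₁ := ContinuousLinearMap.adjoint D with hDadjdef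
  -- bound on D on the closure of the range of Rz
  have hbound : ∀ f : E₂, ∀ y ∈ (LinearMap.range (Rz : E₁ →ₗ[ℝ] E₁)).topologicalClosure,
      |⟪D y, f⟫| ≤ ‖y‖ * ‖Rw f‖ := by
    intro f y hy
    have hcl : IsClosed {y : E₁ | |⟪D y, f⟫| ≤ ‖y‖ * ‖Rw f‖} := by
      apply isClosed_le
      · exact (D.continuous.inner continuous_const).abs
      · exact continuous_norm.mul continuous_const
    have hsub : (LinearMap.range (Rz : E₁ →ₗ[ℝ] E₁) : Set E₁) ⊆ {y | |⟪D y, f⟫| ≤ ‖y‖ * ‖Rw f‖} := by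
      rintro _ ⟨e, rfl⟩
      have hDRz : D (Rz e) = Cwz e := by rw [hDfac]; rfl
      rw [Set.mem_setOf_eq, ContinuousLinearMap.coe_coe, hDRz]
      exact hcs e f
    exact closure_minimal hsub hcl hy
  have hDadjbound : ∀ f, ‖Dadj f‖ ≤ 1 * ‖Rw f‖ := by
    intro f
    rw [one_mul]
    rcases eq_or_lt_of_le (norm_nonneg (Dadj f)) with h0 | h0
    · rw [← h0]; exact norm_nonneg _
    · have key : ‖Dadj f‖ * ‖Dadj f‖ ≤ ‖Rw f‖ * ‖Dadj f‖ := by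
        have h3 : D (Dadj f) = D (projClosureRan Rz (Dadj f)) := by
          conv_lhs => rw [← hDproj]
          rfl
        have h4 := hbound f _ (projClosureRan_mem Rz (Dadj f))
        calc ‖Dadj f‖ * ‖Dadj f‖ = ⟪Dadj f, Dadj f⟫ :=
              (real_inner_self_eq_norm_mul_norm _).symm
          _ = ⟪f, D (Dadj f)⟫ := ContinuousLinearMap.adjoint_inner_left D (Dadj f) f
          _ ≤ |⟪D (projClosureRan Rz (Dadj f)), f⟫| := by
              rw [h3, real_inner_comm]; exact le_abs_self _
          _ ≤ ‖projClosureRan Rz (Dadj f)‖ * ‖Rw f‖ := h4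
          _ ≤ ‖Dadj f‖ * ‖Rw f‖ :=
              mul_le_mul_of_nonneg_right (norm_projClosureRan_le _ _) (norm_nonneg _)
          _ = ‖Rw f‖ * ‖Dadj f‖ := mul_comm _ _
      exact le_of_mul_le_mul_right key h0
  -- second Douglas factorization : Dadj = V ∘L Rw
  obtain ⟨V, hVnorm, hVran, hVproj, hVfac⟩ :=
    douglas Dadj Rw 1 zero_le_one hDadjbound
  -- adjoint of projClosureRan is itself
  have hPz := (projClosureRan_isSelfAdjoint Rz).adjoint_eq
  have hPw := (projClosureRan_isSelfAdjoint Rw).adjoint_eq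
  -- range of Dadj lies in the closure of the range of Rz
  have hDadjmem : ∀ f, Dadj f ∈ (LinearMap.range (Rz : E₁ →ₗ[ℝ] E₁)).topologicalClosure := by
    intro f
    have h1 : projClosureRan Rz ∘L Dadj = Dadj := by
      have := congrArg ContinuousLinearMap.adjoint hDproj
      rwa [ContinuousLinearMap.adjoint_comp, hPz, ← hDadjdef] at this
    have h2 := ContinuousLinearMap.ext_iff.mp h1 f
    rw [ContinuousLinearMap.comp_apply] at h2
    rw [← h2]
    exact projClosureRan_mem Rz _
  have hVmem : ∀ f, V f ∈ (LinearMap.range (Rz : E₁ →ₗ[ℝ] E₁)).topologicalClosure := by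
    intro f
    have hle : (LinearMap.range (Dadj : E₂ →ₗ[ℝ] E₁)).topologicalClosure
        ≤ (LinearMap.range (Rz : E₁ →ₗ[ℝ] E₁)).topologicalClosure := by
      apply Submodule.topologicalClosure_minimal
      · rintro _ ⟨f', rfl⟩
        exact hDadjmem f'
      · exact Submodule.isClosed_topologicalClosure _
    exact hle (hVran f)
  have hPV : projClosureRan Rz ∘L V = V := by
    ext f
    exact projClosureRan_eq_self Rz (hVmem f)
  refine ⟨ContinuousLinearMap.adjoint V, ?_, ?_, ?_⟩
  · calc ‖ContinuousLinearMap.adjoint V‖ = ‖V‖ :=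
        LinearIsometryEquiv.norm_map ContinuousLinearMap.adjoint V
      _ ≤ 1 := hVnorm
  · have hU1 : ContinuousLinearMap.adjoint V ∘L projClosureRan Rz
        = ContinuousLinearMap.adjoint V := by
      have := congrArg ContinuousLinearMap.adjoint hPV
      rwa [ContinuousLinearMap.adjoint_comp, hPz] at this
    have hU2 : projClosureRan Rw ∘L ContinuousLinearMap.adjoint V
        = ContinuousLinearMap.adjoint V := by
      have := congrArg ContinuousLinearMap.adjoint hVproj
      rwa [ContinuousLinearMap.adjoint_comp, hPw] at this
    calc projClosureRan Rw ∘L ContinuousLinearMap.adjoint V ∘L projClosureRan Rz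
        = projClosureRan Rw ∘L ContinuousLinearMap.adjoint V := by rw [hU1]
      _ = ContinuousLinearMap.adjoint V := hU2
  · have hD : D = Rw ∘L ContinuousLinearMap.adjoint V := by
      have h1 : D = ContinuousLinearMap.adjoint Dadj :=
        (ContinuousLinearMap.adjoint_adjoint D).symm
      rw [h1, hVfac, ContinuousLinearMap.adjoint_comp, hRw.isSelfAdjoint.adjoint_eq]
    rw [hDfac, hD]
    rfl
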